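/- Let p, u, v, w, q, g, z, r be real numbers with q·r = g². Define F : ℝ³ → Matrix 3 3 ℝ by F(y) = [[p, u·e^{−y₁}, v·e^{−y₁}], [w·e^{−y₁}, q·e^{−2y₁}, g·e^{−2y₁}], [z·e^{−y₁}, g·e^{−2y₁}, r·e^{−2y₁}]], let B(y) = (F(y) − F(y)ᵀ)/2 be its antisymmetric part, and define the torsion H_{ijk}(y) = ∂_{y_i}B_{jk}(y) + ∂_{y_j}B_{ki}(y) + ∂_{y_k}B_{ij}(y). Then H_{ijk}(y) = 0 for all indices i,j,k ∈ {1,2,3} and all y ∈ ℝ³, i.e. the sigma model on the Manin triple (5|1) is torsionless. -/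

import Mathlib

open Real Matrix

/-- The torsion potential of a sigma model tensor `F`: its antisymmetric part. -/
noncomputable def Bpot (F : (Fin 3 → ℝ) → Matrix (Fin 3) (Fin 3) ℝ)
    (y : Fin 3 → ℝ) : Matrix (Fin 3) (Fin 3) ℝ :=
  (1 / 2 : ℝ) • (F y - (F y)ᵀ)

/-- The torsion `H_{ijk} = ∂ᵢ B_{jk} + ∂ⱼ B_{ki} + ∂ₖ B_{ij}` of a sigma model
tensor `F`, where `∂ᵢ` is the partial derivative in the `i`-th coordinate. -/
noncomputable def torsionH (F : (Fin 3 → ℝ) → Matrix (Fin 3) (Fin 3) ℝ)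
    (y : Fin 3 → ℝ) (i j k : Fin 3) : ℝ :=
  deriv (fun t => Bpot F (Function.update y i t) j k) (y i) +
  deriv (fun t => Bpot F (Function.update y j t) k i) (y j) +
  deriv (fun t => Bpot F (Function.update y k t) i j) (y k)

/-- The tensor `F` of the sigma model on the Manin triple `(5|1)`. -/
noncomputable def F51 (p u v w q g z r : ℝ) (y : Fin 3 → ℝ) : Matrix (Fin 3) (Fin 3) ℝ :=
  !![p,                  u * exp (-(y 0)),       v * exp (-(y 0));
     w * exp (-(y 0)),   q * exp (-(2 * y 0)),   g * exp (-(2 * y 0));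
     z * exp (-(y 0)),   g * exp (-(2 * y 0)),   r * exp (-(2 * y 0))]

/-!
The torsion potential `B` of `F51` depends on `y 0` alone, and its entries vanish outside row and
column `0`. For pairwise distinct `i, j, k`, each term `∂ᵢ B_{jk}` of `H_{ijk}` vanishes: either
`i ≠ 0` and `B` is constant in that direction, or `i = 0` and `B_{jk} = B 1 2 = 0`. If two indices
coincide, the three terms cancel by antisymmetry of `B` alone.
-/

section Torsion

variable (F : (Fin 3 → ℝ) → Matrix (Fin 3) (Fin 3) ℝ) (y : Fin 3 → ℝ)

theorem Bpot_apply_swap (i j : Fin 3) : Bpot F y j i = -Bpot F y i j := by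
  simp only [Bpot, Matrix.smul_apply, Matrix.sub_apply, transpose_apply, smul_eq_mul]
  ring

theorem Bpot_apply_self (i : Fin 3) : Bpot F y i i = 0 := by
  have := Bpot_apply_swap F y i i
  linarith

theorem torsionH_cycle (i j k : Fin 3) : torsionH F y i j k = torsionH F y j k i := by
  simp only [torsionH]
  ring

theorem torsionH_self_left (i k : Fin 3) : torsionH F y i i k = 0 := by
  have hswap : (fun t => Bpot F (Function.update y i t) k i) =
      fun t => -Bpot F (Function.update y i t) i k :=
    funext fun t => Bpot_apply_swap F _ i k
  simp only [torsionH, hswap, deriv.fun_neg, Bpot_apply_self, deriv_const]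
  ring

theorem torsionH_eq_zero_of_not_injective {i j k : Fin 3} (h : i = j ∨ j = k ∨ k = i) :
    torsionH F y i j k = 0 := by
  rcases h with rfl | rfl | rfl
  · exact torsionH_self_left F y i k
  · rw [torsionH_cycle]
    exact torsionH_self_left F y j i
  · rw [← torsionH_cycle]
    exact torsionH_self_left F y k j

theorem deriv_Bpot_update_eq_zero_of_ne {a i : Fin 3} (hF : ∀ y y', y a = y' a → F y = F y')
    (hi : i ≠ a) (j k : Fin 3) :
    deriv (fun t => Bpot F (Function.update y i t) j k) (y i) = 0 := by
  have hconst : (fun t => Bpot F (Function.update y i t) j k) = fun _ => Bpot F y j k := by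
    funext t
    rw [Bpot, Bpot, hF _ y (Function.update_of_ne hi.symm t y)]
  rw [hconst, deriv_const]

theorem torsionH_eq_zero_of_dependsOn {a : Fin 3} (hF : ∀ y y', y a = y' a → F y = F y')
    (hB : ∀ y j k, j ≠ a → k ≠ a → Bpot F y j k = 0) (i j k : Fin 3) :
    torsionH F y i j k = 0 := by
  by_cases hrep : i = j ∨ j = k ∨ k = i
  · exact torsionH_eq_zero_of_not_injective F y hrep
  push Not at hrep
  obtain ⟨hij, hjk, hki⟩ := hrep
  have hterm : ∀ i j k : Fin 3, i ≠ j → k ≠ i →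
      deriv (fun t => Bpot F (Function.update y i t) j k) (y i) = 0 := by
    intro i j k hij hki
    by_cases hi : i = a
    · subst hi
      simp only [hB _ j k hij.symm hki, deriv_const]
    · exact deriv_Bpot_update_eq_zero_of_ne F y hF hi j k
  rw [torsionH, hterm i j k hij hki, hterm j k i hjk hij, hterm k i j hki hjk]
  ring

end Torsion

section Manin51

variable (p u v w q g z r : ℝ)

theorem F51_congr (y y' : Fin 3 → ℝ) (h : y 0 = y' 0) :
    F51 p u v w q g z r y = F51 p u v w q g z r y' := by
  rw [F51, F51, h]

theorem Bpot_F51_apply_of_ne_zero (y : Fin 3 → ℝ) {j k : Fin 3} (hj : j ≠ 0) (hk : k ≠ 0) :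
    Bpot (F51 p u v w q g z r) y j k = 0 := by
  fin_cases j <;> fin_cases k <;> simp_all [Bpot, F51]

end Manin51

theorem torsion51_eq_zero_general (p u v w q g z r : ℝ) :
    ∀ (y : Fin 3 → ℝ) (i j k : Fin 3), torsionH (F51 p u v w q g z r) y i j k = 0 :=
  fun y => torsionH_eq_zero_of_dependsOn _ y (F51_congr p u v w q g z r)
    (Bpot_F51_apply_of_ne_zero p u v w q g z r)

/-- The sigma model on the Manin triple `(5|1)` is torsionless. -/
theorem torsion51_eq_zero (p u v w q g z r : ℝ) (hqr : q * r = g ^ 2) :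
    ∀ (y : Fin 3 → ℝ) (i j k : Fin 3), torsionH (F51 p u v w q g z r) y i j k = 0 :=
  torsion51_eq_zero_general p u v w q g z r
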